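/- arXiv:1608.01107 — 4 statements merged into one kernel-verified Lean document; each statement's English description precedes it below -/
import Mathlib

section
/- Let (M,g,∇) be an n-dimensional statistical manifold (n ≥ 4) with dual connection ∇*, and let W and W* be the conformal-projective curvature tensors of (M,g,∇) and (M,g,∇*) respectively. Then g(W(X,Y)Z,U) + g(W*(X,Y)U,Z) = 0 for all vector fields X,Y,Z,U. -/
namespace SM

variable (C : Type*) (V : Type*) [CommRing C] [AddCommGroup V] [Module C V]

/-- Abstract differential-geometric setting: `C` plays the role of the ring
`C^∞(M)` of smooth functions on a manifold `M`, `V` the `C`-module `Γ(TM)` of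
smooth vector fields, `D X f` the directional derivative `X f`, and `bracket`
the Lie bracket of vector fields. -/
structure Geo where
  D : V → C → C
  D_add_left : ∀ (X Y : V) (f : C), D (X + Y) f = D X f + D Y f
  D_smul_left : ∀ (f : C) (X : V) (h : C), D (f • X) h = f * D X h
  D_add_right : ∀ (X : V) (f h : C), D X (f + h) = D X f + D X h
  D_mul : ∀ (X : V) (f h : C), D X (f * h) = f * D X h + h * D X f
  bracket : V → V → V
  bracket_D : ∀ (X Y : V) (f : C), D (bracket X Y) f = D X (D Y f) - D Y (D X f)

variable {C V}

/-- `g` is a Riemannian metric: a symmetric nondegenerate `C`-bilinear form. -/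
structure IsMetric (g : V → V → C) : Prop where
  symm : ∀ X Y, g X Y = g Y X
  add_left : ∀ X Y Z, g (X + Y) Z = g X Z + g Y Z
  smul_left : ∀ (f : C) (X Y : V), g (f • X) Y = f * g X Y
  nondeg : ∀ X, (∀ Y, g X Y = 0) → X = 0

/-- `cd` is an affine connection. -/
structure IsConn (A : Geo C V) (cd : V → V → V) : Prop where
  add_left : ∀ X Y Z, cd (X + Y) Z = cd X Z + cd Y Z
  smul_left : ∀ (f : C) (X Y : V), cd (f • X) Y = f • cd X Y
  add_right : ∀ X Y Z, cd X (Y + Z) = cd X Y + cd X Z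
  leibniz : ∀ (X : V) (f : C) (Y : V), cd X (f • Y) = A.D X f • Y + f • cd X Y

/-- `(g, cd)` is a statistical structure: `cd` is a torsion-free affine
connection and `∇ g` is totally symmetric (Codazzi equation). -/
structure IsStatConn (A : Geo C V) (g : V → V → C) (cd : V → V → V)
    extends IsConn A cd : Prop where
  torsion_free : ∀ X Y, cd X Y - cd Y X = A.bracket X Y
  codazzi : ∀ X Y Z,
    A.D X (g Y Z) - g (cd X Y) Z - g Y (cd X Z)
      = A.D Y (g X Z) - g (cd Y X) Z - g X (cd Y Z)

/-- `cds` is the connection dual to `cd` with respect to `g`: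
`X g(Y,Z) = g(∇_X Y, Z) + g(Y, ∇*_X Z)`. -/
def IsDual (A : Geo C V) (g : V → V → C) (cd cds : V → V → V) : Prop :=
  ∀ X Y Z, A.D X (g Y Z) = g (cd X Y) Z + g Y (cds X Z)

/-- Curvature tensor `R(X,Y)Z = ∇_X ∇_Y Z - ∇_Y ∇_X Z - ∇_[X,Y] Z`. -/
def curv (A : Geo C V) (cd : V → V → V) (X Y Z : V) : V :=
  cd X (cd Y Z) - cd Y (cd X Z) - cd (A.bracket X Y) Z

end SM

namespace SM

variable {C V : Type*} [CommRing C] [Algebra ℝ C] [AddCommGroup V] [Module C V]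

/-- Conformal–projective curvature tensor (formula (1.1)), built from the
curvature `curv A cd`, the Ricci tensors `Ric, Rics` of `∇` and `∇*`, the Ricci
operators `RicS, RicSs`, the scalar curvature `σ'`, and `n = dim M`. -/
noncomputable def cpW (A : Geo C V) (g : V → V → C) (cd : V → V → V)
    (Ric Rics : V → V → C) (RicS RicSs : V →ₗ[C] V) (σ' : C) (n : ℕ)
    (X Y Z : V) : V :=
  curv A cd X Y Z
    + (algebraMap ℝ C (1 / ((n : ℝ) * ((n : ℝ) - 2)))
        * (((n : C) - 1) * Ric X Z + Rics X Z)) • Y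
    - (algebraMap ℝ C (1 / ((n : ℝ) * ((n : ℝ) - 2)))
        * (((n : C) - 1) * Ric Y Z + Rics Y Z)) • X
    + (algebraMap ℝ C (1 / ((n : ℝ) * ((n : ℝ) - 2))) * g X Z)
        • (((n : C) - 1) • RicSs Y + RicS Y)
    - (algebraMap ℝ C (1 / ((n : ℝ) * ((n : ℝ) - 2))) * g Y Z)
        • (((n : C) - 1) • RicSs X + RicS X)
    + (algebraMap ℝ C (1 / (((n : ℝ) - 1) * ((n : ℝ) - 2))) * σ' * g Y Z) • X
    - (algebraMap ℝ C (1 / (((n : ℝ) - 1) * ((n : ℝ) - 2))) * σ' * g X Z) • Y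

/-- The tensor `L(X,Y) = (1/(n-2)) { (1/n)[(n-1)Ric(X,Y) + Ric*(X,Y)]
- (σ/(2(n-1))) g(X,Y) }`. -/
noncomputable def cpL (g : V → V → C) (Ric Rics : V → V → C) (σ' : C) (n : ℕ)
    (X Y : V) : C :=
  algebraMap ℝ C (1 / ((n : ℝ) - 2)) *
    (algebraMap ℝ C (1 / (n : ℝ)) * (((n : C) - 1) * Ric X Y + Rics X Y)
      - algebraMap ℝ C (1 / (2 * ((n : ℝ) - 1))) * σ' * g X Y)

/-- The Weyl conformal curvature tensor of a Riemannian manifold. -/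
noncomputable def weyl (A : Geo C V) (g : V → V → C) (cd : V → V → V)
    (Ric : V → V → C) (RicS : V →ₗ[C] V) (σ' : C) (n : ℕ)
    (X Y Z : V) : V :=
  curv A cd X Y Z
    + (algebraMap ℝ C (1 / ((n : ℝ) - 2)) * Ric X Z) • Y
    - (algebraMap ℝ C (1 / ((n : ℝ) - 2)) * Ric Y Z) • X
    + (algebraMap ℝ C (1 / ((n : ℝ) - 2)) * g X Z) • RicS Y
    - (algebraMap ℝ C (1 / ((n : ℝ) - 2)) * g Y Z) • RicS X
    - (algebraMap ℝ C (1 / (((n : ℝ) - 1) * ((n : ℝ) - 2))) * σ' * g X Z) • Y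
    + (algebraMap ℝ C (1 / (((n : ℝ) - 1) * ((n : ℝ) - 2))) * σ' * g Y Z) • X

end SM

/-!
The curvature parts of `W` and `W*` cancel because dual connections satisfy
`g(R(X,Y)Z, U) = -g(R*(X,Y)U, Z)`: expand `X Y g(Z,U) - Y X g(Z,U) = [X,Y] g(Z,U)` by duality.
The Ricci parts cancel pairwise by the symmetric shape of the formula, which leaves
`(σ - σ*)(g(Y,Z) g(X,U) - g(X,Z) g(Y,U))` up to a constant. Finally `σ = σ*`: contracting the
curvature identity twice with the inverse metric exchanges `R` and `R*`. Over the ring `C` the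
metric is only injective, so the inverse metric is replaced by the adjugate of the Gram matrix;
this gives `(det G)² σ = (det G)² σ*`, and `det G` is a non-zero-divisor (McCoy) since `G` is
injective.
-/

namespace SM

section Metric

variable {C V : Type*} [CommRing C] [AddCommGroup V] [Module C V] {g : V → V → C}

theorem IsMetric.add_right (hg : IsMetric g) (X Y Z : V) : g X (Y + Z) = g X Y + g X Z := by
  rw [hg.symm, hg.add_left, hg.symm Y, hg.symm Z]

theorem IsMetric.smul_right (hg : IsMetric g) (f : C) (X Y : V) : g X (f • Y) = f * g X Y := by
  rw [hg.symm, hg.smul_left, hg.symm Y]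

def IsMetric.toBilinForm (hg : IsMetric g) : LinearMap.BilinForm C V :=
  LinearMap.mk₂ C g hg.add_left hg.smul_left hg.add_right hg.smul_right

@[simp]
theorem IsMetric.toBilinForm_apply (hg : IsMetric g) (X Y : V) : hg.toBilinForm X Y = g X Y :=
  rfl

theorem IsMetric.neg_left (hg : IsMetric g) (X Y : V) : g (-X) Y = -g X Y := by
  simp only [← hg.toBilinForm_apply, map_neg, LinearMap.neg_apply]

theorem IsMetric.sub_left (hg : IsMetric g) (X Y Z : V) : g (X - Y) Z = g X Z - g Y Z := by
  simp only [← hg.toBilinForm_apply, map_sub, LinearMap.sub_apply]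

theorem IsMetric.apply_eq_sum_repr_right {ι : Type*} [Fintype ι] (hg : IsMetric g)
    (b : Module.Basis ι C V) (X Y : V) : g X Y = ∑ i, b.repr Y i * g X (b i) := by
  conv_lhs => rw [← b.sum_repr Y]
  simp only [← hg.toBilinForm_apply, map_sum, map_smul, smul_eq_mul]

end Metric

section Gram

open Matrix

variable {C V ι : Type*} [CommRing C] [AddCommGroup V] [Module C V] [Fintype ι]
  {g : V → V → C}

noncomputable def gram (g : V → V → C) (b : Module.Basis ι C V) : Matrix ι ι C :=
  Matrix.of fun i j => g (b i) (b j)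

theorem gram_mulVec_repr (hg : IsMetric g) (b : Module.Basis ι C V) (v : V) :
    gram g b *ᵥ b.repr v = fun i => g (b i) v := by
  ext i
  rw [hg.apply_eq_sum_repr_right b]
  simp only [mulVec, dotProduct, gram, of_apply, mul_comm]

theorem det_gram_mul_repr [DecidableEq ι] (hg : IsMetric g) (b : Module.Basis ι C V) (v : V)
    (l : ι) :
    (gram g b).det * b.repr v l = ∑ m, (gram g b).adjugate l m * g (b m) v := by
  have h := congrFun (mulVec_mulVec (b.repr v) (gram g b).adjugate (gram g b)) l
  rw [gram_mulVec_repr hg, adjugate_mul, smul_mulVec, one_mulVec] at h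
  simpa only [mulVec, dotProduct, Pi.smul_apply, smul_eq_mul] using h.symm

theorem det_gram_mem_nonZeroDivisors [DecidableEq ι] (hg : IsMetric g) (b : Module.Basis ι C V) :
    (gram g b).det ∈ nonZeroDivisors C := by
  refine nonsingular_iff_det_mem_nonZeroDivisors.1 <| isLeftRegular_iff_nonsingular.1 <|
    isLeftRegular_iff_mulVec_injective.2 <| (injective_iff_map_eq_zero (gram g b).mulVecLin).2 ?_
  intro w hw
  set v := b.equivFun.symm w
  have hrepr : b.repr v = w := b.equivFun.apply_symm_apply w
  have hv : ∀ i, g (b i) v = 0 := fun i => by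
    rw [← congrFun (gram_mulVec_repr hg b v) i, hrepr]
    exact congrFun hw i
  have hv0 : v = 0 := hg.nondeg v fun Y => by
    rw [hg.apply_eq_sum_repr_right b]
    exact Finset.sum_eq_zero fun i _ => by rw [hg.symm, hv, mul_zero]
  rw [← hrepr, hv0, map_zero]
  rfl

theorem det_gram_mul_trace [DecidableEq ι] (hg : IsMetric g) (b : Module.Basis ι C V)
    (F : V →ₗ[C] V) :
    (gram g b).det * LinearMap.trace C V F
      = ∑ q : ι × ι, (gram g b).adjugate q.1 q.2 * g (b q.2) (F (b q.1)) := by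
  rw [LinearMap.trace_eq_matrix_trace C b, trace, Finset.mul_sum, Fintype.sum_prod_type]
  refine Finset.sum_congr rfl fun l _ => ?_
  rw [diag_apply, LinearMap.toMatrix_apply, det_gram_mul_repr hg]

/-- With `a` the adjugate of the Gram matrix `G`, this is `(det G)²` times the scalar curvature
of `R`. -/
noncomputable def curvContraction (a : Matrix ι ι C) (g : V → V → C) (b : Module.Basis ι C V)
    (R : V → V → V → V) : C :=
  ∑ p : ι × ι, ∑ q : ι × ι, a p.1 p.2 * a q.1 q.2 * g (b q.2) (R (b q.1) (b p.1) (b p.2))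

theorem det_gram_sq_mul_trace [DecidableEq ι] (hg : IsMetric g) (b : Module.Basis ι C V)
    (R : V → V → V → V) (T : V → V → V →ₗ[C] V) (hT : ∀ Y Z X, T Y Z X = R X Y Z)
    (Ric : V → V → C) (hRic : ∀ Y Z, Ric Y Z = LinearMap.trace C V (T Y Z))
    (RicS : V →ₗ[C] V) (hRicS : ∀ X Y, g (RicS X) Y = Ric X Y) :
    (gram g b).det ^ 2 * LinearMap.trace C V RicS
      = curvContraction (gram g b).adjugate g b R := by
  rw [sq, mul_assoc, det_gram_mul_trace hg, Finset.mul_sum, curvContraction]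
  refine Finset.sum_congr rfl fun p _ => ?_
  rw [hg.symm, hRicS, mul_left_comm, hRic, det_gram_mul_trace hg, Finset.mul_sum]
  simp only [hT, mul_assoc]

theorem curvContraction_eq_of_dual (hg : IsMetric g) (a : Matrix ι ι C)
    (b : Module.Basis ι C V) {R Rs : V → V → V → V}
    (hdual : ∀ X Y Z U, g (R X Y Z) U = -g (Rs X Y U) Z)
    (hskew : ∀ X Y Z, Rs X Y Z = -Rs Y X Z) :
    curvContraction a g b R = curvContraction a g b Rs := by
  rw [curvContraction, curvContraction, Finset.sum_comm]
  refine Finset.sum_congr rfl fun q _ => Finset.sum_congr rfl fun p _ => ?_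
  have hterm :
      g (b q.2) (R (b q.1) (b p.1) (b p.2)) = g (b p.2) (Rs (b p.1) (b q.1) (b q.2)) := by
    rw [hg.symm, hdual, hskew, hg.neg_left, neg_neg, hg.symm]
  rw [hterm, mul_comm (a p.1 p.2)]

end Gram

section Curvature

variable {C V : Type*} [CommRing C] [AddCommGroup V] [Module C V] {A : Geo C V}
  {g : V → V → C} {cd cds : V → V → V}

theorem IsDual.metric_curv_eq_neg (hg : IsMetric g) (hdual : IsDual A g cd cds) (X Y Z U : V) :
    g (curv A cd X Y Z) U = -g (curv A cds X Y U) Z := by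
  have hXY : A.D X (A.D Y (g Z U))
      = g (cd X (cd Y Z)) U + g (cd Y Z) (cds X U)
        + (g (cd X Z) (cds Y U) + g Z (cds X (cds Y U))) := by
    rw [hdual Y Z U, A.D_add_right, hdual X (cd Y Z) U, hdual X Z (cds Y U)]
  have hYX : A.D Y (A.D X (g Z U))
      = g (cd Y (cd X Z)) U + g (cd X Z) (cds Y U)
        + (g (cd Y Z) (cds X U) + g Z (cds Y (cds X U))) := by
    rw [hdual X Z U, A.D_add_right, hdual Y (cd X Z) U, hdual Y Z (cds X U)]
  have hbr := A.bracket_D X Y (g Z U)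
  rw [hXY, hYX, hdual (A.bracket X Y) Z U] at hbr
  simp only [curv, hg.sub_left, hg.symm _ Z]
  linear_combination -hbr

theorem bracket_skew_of_torsionFree (htf : ∀ X Y, cd X Y - cd Y X = A.bracket X Y) (X Y : V) :
    A.bracket X Y = -A.bracket Y X := by
  rw [← htf, ← htf, neg_sub]

theorem IsConn.curv_skew (hconn : IsConn A cd) (hbr : ∀ X Y, A.bracket X Y = -A.bracket Y X)
    (X Y Z : V) : curv A cd X Y Z = -curv A cd Y X Z := by
  have hneg : cd (-A.bracket Y X) Z = -cd (A.bracket Y X) Z := by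
    simpa only [neg_one_smul] using hconn.smul_left (-1) (A.bracket Y X) Z
  simp only [curv, hbr X Y, hneg]
  abel

theorem trace_ricciOp_eq_of_dual [Module.Free C V] [Module.Finite C V] (hg : IsMetric g)
    {R Rs : V → V → V → V} (hdual : ∀ X Y Z U, g (R X Y Z) U = -g (Rs X Y U) Z)
    (hskew : ∀ X Y Z, Rs X Y Z = -Rs Y X Z)
    (T Ts : V → V → V →ₗ[C] V) (hT : ∀ Y Z X, T Y Z X = R X Y Z)
    (hTs : ∀ Y Z X, Ts Y Z X = Rs X Y Z)
    (Ric Rics : V → V → C) (hRic : ∀ Y Z, Ric Y Z = LinearMap.trace C V (T Y Z))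
    (hRics : ∀ Y Z, Rics Y Z = LinearMap.trace C V (Ts Y Z))
    (RicS RicSs : V →ₗ[C] V) (hRicS : ∀ X Y, g (RicS X) Y = Ric X Y)
    (hRicSs : ∀ X Y, g (RicSs X) Y = Rics X Y) :
    LinearMap.trace C V RicS = LinearMap.trace C V RicSs := by
  classical
  let b := Module.Free.chooseBasis C V
  have hdet := pow_mem (det_gram_mem_nonZeroDivisors hg b) 2
  have h : (gram g b).det ^ 2 * LinearMap.trace C V RicS
      = (gram g b).det ^ 2 * LinearMap.trace C V RicSs := by
    rw [det_gram_sq_mul_trace hg b R T hT Ric hRic RicS hRicS,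
      det_gram_sq_mul_trace hg b Rs Ts hTs Rics hRics RicSs hRicSs,
      curvContraction_eq_of_dual hg _ b hdual hskew]
  rw [← sub_eq_zero, ← mul_left_mem_nonZeroDivisors_eq_zero_iff hdet, mul_sub, h, sub_self]

theorem metric_cpW_add_cpW_dual [Algebra ℝ C] (hg : IsMetric g)
    (hcurv : ∀ X Y Z U, g (curv A cd X Y Z) U = -g (curv A cds X Y U) Z)
    {Ric Rics : V → V → C} {RicS RicSs : V →ₗ[C] V}
    (hRicS : ∀ X Y, g (RicS X) Y = Ric X Y) (hRicSs : ∀ X Y, g (RicSs X) Y = Rics X Y)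
    (σ : C) (n : ℕ) (X Y Z U : V) :
    g (cpW A g cd Ric Rics RicS RicSs σ n X Y Z) U
      + g (cpW A g cds Rics Ric RicSs RicS σ n X Y U) Z = 0 := by
  simp only [cpW, hg.add_left, hg.sub_left, hg.smul_left, hRicS, hRicSs, hcurv X Y Z U]
  ring

end Curvature

end SM

theorem stmt3_general {C V : Type*} [CommRing C] [Algebra ℝ C] [AddCommGroup V]
    [Module C V] [Module.Free C V] [Module.Finite C V]
    (A : SM.Geo C V) (g : V → V → C) (cd cds : V → V → V)
    (hg : SM.IsMetric g) (hstat : SM.IsStatConn A g cd)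
    (hconn : SM.IsConn A cds) (hdual : SM.IsDual A g cd cds)
    (T Ts : V → V → V →ₗ[C] V)
    (hT : ∀ Y Z X, T Y Z X = SM.curv A cd X Y Z)
    (hTs : ∀ Y Z X, Ts Y Z X = SM.curv A cds X Y Z)
    (Ric Rics : V → V → C)
    (hRic : ∀ Y Z, Ric Y Z = LinearMap.trace C V (T Y Z))
    (hRics : ∀ Y Z, Rics Y Z = LinearMap.trace C V (Ts Y Z))
    (RicS RicSs : V →ₗ[C] V)
    (hRicS : ∀ X Y, g (RicS X) Y = Ric X Y)
    (hRicSs : ∀ X Y, g (RicSs X) Y = Rics X Y)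
    (σ' σ's : C)
    (hσ : σ' = LinearMap.trace C V RicS)
    (hσs : σ's = LinearMap.trace C V RicSs)
    :
    ∀ X Y Z U : V,
      g (SM.cpW A g cd Ric Rics RicS RicSs σ' (Module.finrank C V) X Y Z) U
      + g (SM.cpW A g cds Rics Ric RicSs RicS σ's (Module.finrank C V) X Y U) Z
      = 0 := by
  have hcurv := hdual.metric_curv_eq_neg hg
  have hskew := hconn.curv_skew (SM.bracket_skew_of_torsionFree hstat.torsion_free)
  have hσ_eq : σ's = σ' := by
    rw [hσ, hσs]
    exact (SM.trace_ricciOp_eq_of_dual hg hcurv hskew T Ts hT hTs Ric Rics hRic hRics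
      RicS RicSs hRicS hRicSs).symm
  rw [hσ_eq]
  exact SM.metric_cpW_add_cpW_dual hg hcurv hRicS hRicSs σ' _

/-- Theorem 2.1: for the conformal-projective curvature tensors `W` of
`(M,g,∇)` and `W*` of the dual statistical manifold `(M,g,∇*)`,
`g(W(X,Y)Z, U) + g(W*(X,Y)U, Z) = 0`. -/
theorem stmt3 {C V : Type*} [CommRing C] [Algebra ℝ C] [AddCommGroup V]
    [Module C V] [Module.Free C V] [Module.Finite C V]
    (A : SM.Geo C V) (g : V → V → C) (cd cds : V → V → V)
    (hn : 4 ≤ Module.finrank C V)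
    (hg : SM.IsMetric g) (hstat : SM.IsStatConn A g cd)
    (hconn : SM.IsConn A cds) (hdual : SM.IsDual A g cd cds)
    (T Ts : V → V → V →ₗ[C] V)
    (hT : ∀ Y Z X, T Y Z X = SM.curv A cd X Y Z)
    (hTs : ∀ Y Z X, Ts Y Z X = SM.curv A cds X Y Z)
    (Ric Rics : V → V → C)
    (hRic : ∀ Y Z, Ric Y Z = LinearMap.trace C V (T Y Z))
    (hRics : ∀ Y Z, Rics Y Z = LinearMap.trace C V (Ts Y Z))
    (RicS RicSs : V →ₗ[C] V)
    (hRicS : ∀ X Y, g (RicS X) Y = Ric X Y)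
    (hRicSs : ∀ X Y, g (RicSs X) Y = Rics X Y)
    (σ' σ's : C)
    (hσ : σ' = LinearMap.trace C V RicS)
    (hσs : σ's = LinearMap.trace C V RicSs)
    :
    ∀ X Y Z U : V,
      g (SM.cpW A g cd Ric Rics RicS RicSs σ' (Module.finrank C V) X Y Z) U
      + g (SM.cpW A g cds Rics Ric RicSs RicS σ's (Module.finrank C V) X Y U) Z
      = 0 :=
  stmt3_general A g cd cds hg hstat hconn hdual T Ts hT hTs Ric Rics hRic hRics RicS RicSs hRicS
    hRicSs σ' σ's hσ hσs
end

section
/- Let (M,g,∇) be an n-dimensional statistical manifold (n ≥ 4) with dual connection ∇*. Then the conformal-projective curvature tensor W of (M,g,∇) vanishes identically if and only if the conformal-projective curvature tensor W* of the dual statistical manifold (M,g,∇*) vanishes identically. -/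
/-! The curvature tensors of dual connections are adjoint, `g(R(X,Y)Z,U) = -g(Z,R*(X,Y)U)`, and
inserting this into the definitions gives
`g(W(X,Y)Z,U) + g(W*(X,Y)U,Z) = (σ - σ*)/((n-1)(n-2)) · (g(Y,Z)g(X,U) - g(X,Z)g(Y,U))`.
Contracting `X ↦ W(X,Y)Z` leaves only `(n-1)/(n(n-2)) · (σ - σ*) g(Y,Z)`, so `W = 0` forces
`(σ - σ*) g = 0`, and then `W* = 0` by nondegeneracy of `g`. The situation is symmetric in
`∇` and `∇*`. -/

namespace SM

variable {C V : Type*} [CommRing C] [AddCommGroup V] [Module C V]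

namespace IsMetric

variable {g : V → V → C}

theorem zero_left (hg : IsMetric g) (Z : V) : g 0 Z = 0 := by
  simpa using hg.smul_left 0 0 Z

theorem sub_left_s4 (hg : IsMetric g) (X Y Z : V) : g (X - Y) Z = g X Z - g Y Z := by
  rw [sub_eq_add_neg, ← neg_one_smul C Y, hg.add_left, hg.smul_left]
  ring

theorem sub_right (hg : IsMetric g) (X Y Z : V) : g X (Y - Z) = g X Y - g X Z := by
  rw [hg.symm, hg.sub_left_s4, hg.symm Y X, hg.symm Z X]

def leftLinearMap (hg : IsMetric g) (Z : V) : V →ₗ[C] C where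
  toFun X := g X Z
  map_add' X Y := hg.add_left X Y Z
  map_smul' c X := hg.smul_left c X Z

@[simp]
theorem leftLinearMap_apply (hg : IsMetric g) (Z X : V) : hg.leftLinearMap Z X = g X Z := rfl

end IsMetric

namespace IsDual

variable {A : Geo C V} {g : V → V → C} {cd cds : V → V → V}

theorem symm (hg : IsMetric g) (hdual : IsDual A g cd cds) : IsDual A g cds cd := by
  intro X Y Z
  rw [hg.symm Y Z, hdual X Z Y, hg.symm (cd X Z) Y, hg.symm Z (cds X Y)]
  ring

theorem g_curv_add_g_curv_eq_zero (hg : IsMetric g) (hdual : IsDual A g cd cds)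
    (X Y Z U : V) : g (curv A cd X Y Z) U + g Z (curv A cds X Y U) = 0 := by
  have hXY : A.D X (A.D Y (g Z U))
      = g (cd X (cd Y Z)) U + g (cd Y Z) (cds X U)
        + (g (cd X Z) (cds Y U) + g Z (cds X (cds Y U))) := by
    rw [hdual Y Z U, A.D_add_right, hdual X (cd Y Z) U, hdual X Z (cds Y U)]
  have hYX : A.D Y (A.D X (g Z U))
      = g (cd Y (cd X Z)) U + g (cd X Z) (cds Y U)
        + (g (cd Y Z) (cds X U) + g Z (cds Y (cds X U))) := by
    rw [hdual X Z U, A.D_add_right, hdual Y (cd X Z) U, hdual Y Z (cds X U)]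
  have hbracket := hdual (A.bracket X Y) Z U
  rw [A.bracket_D] at hbracket
  simp only [curv, hg.sub_left_s4, hg.sub_right]
  linear_combination hYX + hbracket - hXY

end IsDual

section Coefficients

variable (C) [Algebra ℝ C]

theorem algebraMap_one_div_mul_sub_two_mul_self {n : ℕ} (hn : 3 ≤ n) :
    algebraMap ℝ C (1 / ((n : ℝ) * ((n : ℝ) - 2))) * ((n : C) * ((n : C) - 2)) = 1 := by
  have hn' : (3 : ℝ) ≤ n := by exact_mod_cast hn
  rw [← map_natCast (algebraMap ℝ C) n, ← map_ofNat (algebraMap ℝ C) 2, ← map_sub, ← map_mul,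
    ← map_mul, ← map_one (algebraMap ℝ C)]
  congr 1
  field_simp [show (n : ℝ) ≠ 0 by linarith, show (n : ℝ) - 2 ≠ 0 by linarith]

theorem algebraMap_one_div_mul_sub_two_mul_natCast {n : ℕ} (hn : 3 ≤ n) :
    algebraMap ℝ C (1 / ((n : ℝ) * ((n : ℝ) - 2))) * (n : C)
      = algebraMap ℝ C (1 / (((n : ℝ) - 1) * ((n : ℝ) - 2))) * ((n : C) - 1) := by
  have hn' : (3 : ℝ) ≤ n := by exact_mod_cast hn
  rw [← map_natCast (algebraMap ℝ C) n, ← map_one (algebraMap ℝ C), ← map_sub, ← map_mul,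
    ← map_mul]
  congr 1
  field_simp [show (n : ℝ) ≠ 0 by linarith, show (n : ℝ) - 1 ≠ 0 by linarith,
    show (n : ℝ) - 2 ≠ 0 by linarith]

theorem isUnit_algebraMap_one_div_mul_sub_two_mul_sub_one {n : ℕ} (hn : 3 ≤ n) :
    IsUnit (algebraMap ℝ C (1 / ((n : ℝ) * ((n : ℝ) - 2))) * ((n : C) - 1)) := by
  have hn' : (3 : ℝ) ≤ n := by exact_mod_cast hn
  rw [← map_natCast (algebraMap ℝ C) n, ← map_one (algebraMap ℝ C), ← map_sub, ← map_mul]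
  have hpos : (0 : ℝ) < (n : ℝ) * ((n : ℝ) - 2) := by nlinarith
  exact (IsUnit.mk0 _ (mul_ne_zero (one_div_ne_zero hpos.ne') (by linarith))).map _

end Coefficients

variable [Algebra ℝ C] {A : Geo C V} {g : V → V → C} {cd cds : V → V → V}
  {T : V → V → V →ₗ[C] V} {Ric Rics : V → V → C} {RicS RicSs : V →ₗ[C] V}

theorem trace_cpW [Module.Free C V] [Module.Finite C V] {σ' σ's : C}
    (hn : 3 ≤ Module.finrank C V) (hg : IsMetric g)
    (hT : ∀ Y Z X, T Y Z X = curv A cd X Y Z)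
    (hRic : ∀ Y Z, Ric Y Z = LinearMap.trace C V (T Y Z))
    (hRicS : ∀ X Y, g (RicS X) Y = Ric X Y) (hRicSs : ∀ X Y, g (RicSs X) Y = Rics X Y)
    (hσ : σ' = LinearMap.trace C V RicS) (hσs : σ's = LinearMap.trace C V RicSs)
    (Y Z : V) (L : V →ₗ[C] V)
    (hL : ∀ X, L X = cpW A g cd Ric Rics RicS RicSs σ' (Module.finrank C V) X Y Z) :
    LinearMap.trace C V L
      = algebraMap ℝ C (1 / ((Module.finrank C V : ℝ) * ((Module.finrank C V : ℝ) - 2)))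
          * ((Module.finrank C V : C) - 1) * (σ' - σ's) * g Y Z := by
  set n := Module.finrank C V
  set a : C := algebraMap ℝ C (1 / ((n : ℝ) * ((n : ℝ) - 2)))
  set b : C := algebraMap ℝ C (1 / (((n : ℝ) - 1) * ((n : ℝ) - 2)))
  set gZ := hg.leftLinearMap Z
  have hL_eq : L = T Y Z
      + (a • (((n : C) - 1) • (gZ ∘ₗ RicS) + gZ ∘ₗ RicSs)).smulRight Y
      - (a * (((n : C) - 1) * Ric Y Z + Rics Y Z)) • LinearMap.id
      + (a • gZ).smulRight (((n : C) - 1) • RicSs Y + RicS Y)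
      - (a * g Y Z) • (((n : C) - 1) • RicSs + RicS)
      + (b * σ' * g Y Z) • LinearMap.id
      - ((b * σ') • gZ).smulRight Y := by
    ext X
    simp only [hL, cpW, LinearMap.add_apply, LinearMap.sub_apply, LinearMap.smul_apply,
      LinearMap.smulRight_apply, LinearMap.coe_comp, Function.comp_apply, LinearMap.id_apply,
      IsMetric.leftLinearMap_apply, hT, hRicS, hRicSs, smul_eq_mul, gZ, a, b]
  simp only [hL_eq, map_add, map_sub, map_smul, LinearMap.trace_smulRight, LinearMap.trace_id,
    LinearMap.add_apply, LinearMap.smul_apply, LinearMap.coe_comp, Function.comp_apply,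
    IsMetric.leftLinearMap_apply, smul_eq_mul, hRicS, hRicSs, ← hRic, ← hσ, ← hσs, gZ]
  linear_combination -Ric Y Z * algebraMap_one_div_mul_sub_two_mul_self C hn
    - σ' * g Y Z * algebraMap_one_div_mul_sub_two_mul_natCast C hn

theorem IsDual.g_cpW_add_g_cpW (hg : IsMetric g) (hdual : IsDual A g cd cds)
    (hRicS : ∀ X Y, g (RicS X) Y = Ric X Y) (hRicSs : ∀ X Y, g (RicSs X) Y = Rics X Y)
    (σ' σ's : C) (n : ℕ) (X Y Z U : V) :
    g (cpW A g cd Ric Rics RicS RicSs σ' n X Y Z) U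
        + g (cpW A g cds Rics Ric RicSs RicS σ's n X Y U) Z
      = algebraMap ℝ C (1 / (((n : ℝ) - 1) * ((n : ℝ) - 2))) * (σ' - σ's)
          * (g Y Z * g X U - g X Z * g Y U) := by
  simp only [cpW, hg.add_left, hg.sub_left_s4, hg.smul_left, hRicS, hRicSs]
  linear_combination hdual.g_curv_add_g_curv_eq_zero hg X Y Z U
    + hg.symm (curv A cds X Y U) Z

theorem cpW_dual_eq_zero_of_cpW_eq_zero [Module.Free C V] [Module.Finite C V] {σ' σ's : C}
    (hn : 3 ≤ Module.finrank C V) (hg : IsMetric g) (hdual : IsDual A g cd cds)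
    (hT : ∀ Y Z X, T Y Z X = curv A cd X Y Z)
    (hRic : ∀ Y Z, Ric Y Z = LinearMap.trace C V (T Y Z))
    (hRicS : ∀ X Y, g (RicS X) Y = Ric X Y) (hRicSs : ∀ X Y, g (RicSs X) Y = Rics X Y)
    (hσ : σ' = LinearMap.trace C V RicS) (hσs : σ's = LinearMap.trace C V RicSs)
    (hW : ∀ X Y Z, cpW A g cd Ric Rics RicS RicSs σ' (Module.finrank C V) X Y Z = 0)
    (X Y U : V) : cpW A g cds Rics Ric RicSs RicS σ's (Module.finrank C V) X Y U = 0 := by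
  set n := Module.finrank C V
  have hunit := isUnit_algebraMap_one_div_mul_sub_two_mul_sub_one C hn
  have hscalar : ∀ Y Z, (σ' - σ's) * g Y Z = 0 := fun Y Z => by
    have htrace := trace_cpW hn hg hT hRic hRicS hRicSs hσ hσs Y Z 0 fun X => (hW X Y Z).symm
    rw [map_zero, mul_assoc] at htrace
    exact hunit.mul_right_eq_zero.mp htrace.symm
  refine hg.nondeg _ fun Z => ?_
  have hWU : g (cpW A g cd Ric Rics RicS RicSs σ' n X Y Z) U = 0 := by rw [hW, hg.zero_left]
  linear_combination hdual.g_cpW_add_g_cpW hg hRicS hRicSs σ' σ's n X Y Z U - hWU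
    + algebraMap ℝ C (1 / (((n : ℝ) - 1) * ((n : ℝ) - 2)))
      * (g X U * hscalar Y Z - g Y U * hscalar X Z)

end SM

theorem stmt4_general {C V : Type*} [CommRing C] [Algebra ℝ C] [AddCommGroup V]
    [Module C V] [Module.Free C V] [Module.Finite C V]
    (A : SM.Geo C V) (g : V → V → C) (cd cds : V → V → V)
    (hn : 4 ≤ Module.finrank C V)
    (hg : SM.IsMetric g)
    (hdual : SM.IsDual A g cd cds)
    (T Ts : V → V → V →ₗ[C] V)
    (hT : ∀ Y Z X, T Y Z X = SM.curv A cd X Y Z)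
    (hTs : ∀ Y Z X, Ts Y Z X = SM.curv A cds X Y Z)
    (Ric Rics : V → V → C)
    (hRic : ∀ Y Z, Ric Y Z = LinearMap.trace C V (T Y Z))
    (hRics : ∀ Y Z, Rics Y Z = LinearMap.trace C V (Ts Y Z))
    (RicS RicSs : V →ₗ[C] V)
    (hRicS : ∀ X Y, g (RicS X) Y = Ric X Y)
    (hRicSs : ∀ X Y, g (RicSs X) Y = Rics X Y)
    (σ' σ's : C)
    (hσ : σ' = LinearMap.trace C V RicS)
    (hσs : σ's = LinearMap.trace C V RicSs)
    :
    (∀ X Y Z : V,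
      SM.cpW A g cd Ric Rics RicS RicSs σ' (Module.finrank C V) X Y Z = 0)
    ↔ (∀ X Y Z : V,
      SM.cpW A g cds Rics Ric RicSs RicS σ's (Module.finrank C V) X Y Z = 0) := by
  have h3 : 3 ≤ Module.finrank C V := by omega
  exact ⟨SM.cpW_dual_eq_zero_of_cpW_eq_zero h3 hg hdual hT hRic hRicS hRicSs hσ hσs,
    SM.cpW_dual_eq_zero_of_cpW_eq_zero h3 hg (hdual.symm hg) hTs hRics hRicSs hRicS hσs hσ⟩

/-- The conformal-projective curvature tensor `W` of `(M,g,∇)` vanishes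
identically iff the conformal-projective curvature tensor `W*` of the dual
statistical manifold `(M,g,∇*)` vanishes identically. -/
theorem stmt4 {C V : Type*} [CommRing C] [Algebra ℝ C] [AddCommGroup V]
    [Module C V] [Module.Free C V] [Module.Finite C V]
    (A : SM.Geo C V) (g : V → V → C) (cd cds : V → V → V)
    (hn : 4 ≤ Module.finrank C V)
    (hg : SM.IsMetric g) (hstat : SM.IsStatConn A g cd)
    (hconn : SM.IsConn A cds) (hdual : SM.IsDual A g cd cds)
    (T Ts : V → V → V →ₗ[C] V)
    (hT : ∀ Y Z X, T Y Z X = SM.curv A cd X Y Z)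
    (hTs : ∀ Y Z X, Ts Y Z X = SM.curv A cds X Y Z)
    (Ric Rics : V → V → C)
    (hRic : ∀ Y Z, Ric Y Z = LinearMap.trace C V (T Y Z))
    (hRics : ∀ Y Z, Rics Y Z = LinearMap.trace C V (Ts Y Z))
    (RicS RicSs : V →ₗ[C] V)
    (hRicS : ∀ X Y, g (RicS X) Y = Ric X Y)
    (hRicSs : ∀ X Y, g (RicSs X) Y = Rics X Y)
    (σ' σ's : C)
    (hσ : σ' = LinearMap.trace C V RicS)
    (hσs : σ's = LinearMap.trace C V RicSs)
    :
    (∀ X Y Z : V,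
      SM.cpW A g cd Ric Rics RicS RicSs σ' (Module.finrank C V) X Y Z = 0)
    ↔ (∀ X Y Z : V,
      SM.cpW A g cds Rics Ric RicSs RicS σ's (Module.finrank C V) X Y Z = 0) :=
  stmt4_general A g cd cds hn hg hdual T Ts hT hTs Ric Rics hRic hRics RicS RicSs hRicS hRicSs σ'
    σ's hσ hσs
end

section
/- Let (M,g,∇) be an n-dimensional statistical manifold (n ≥ 4) of constant curvature K. Then its conformal-projective curvature tensor W vanishes identically, i.e., (M,g,∇) is conformally-projectively flat. -/
section Aux

variable {C V : Type*} [CommRing C] [AddCommGroup V] [Module C V]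

lemma SM.gsub_left (g : V → V → C) (hg : SM.IsMetric g) (a b c : V) :
    g (a - b) c = g a c - g b c := by
  have hneg : g (-b) c = - g b c := by
    rw [← neg_one_smul C b, hg.smul_left]; ring
  rw [sub_eq_add_neg, hg.add_left, hneg, sub_eq_add_neg]

lemma SM.gsub_right (g : V → V → C) (hg : SM.IsMetric g) (a b c : V) :
    g a (b - c) = g a b - g a c := by
  rw [hg.symm, SM.gsub_left g hg, hg.symm b a, hg.symm c a]

lemma SM.D_zero (A : SM.Geo C V) (X : V) : A.D X 0 = 0 := by
  have := A.D_add_right X 0 0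
  simp only [add_zero] at this
  linear_combination -this

lemma SM.D_sub (A : SM.Geo C V) (X : V) (a b : C) :
    A.D X (a - b) = A.D X a - A.D X b := by
  have h1 : A.D X 1 = 0 := by
    have := A.D_mul X 1 1
    simp only [one_mul, mul_one] at this
    linear_combination -this
  have hneg1 : A.D X (-1 : C) = 0 := by
    have := A.D_add_right X 1 (-1)
    simp only [add_neg_cancel] at this
    rw [SM.D_zero] at this
    linear_combination -this - h1
  have hneg : A.D X (-b) = - A.D X b := by
    have := A.D_mul X (-1 : C) b
    rw [hneg1] at this
    simp only [neg_one_mul, mul_zero, add_zero] at this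
    linear_combination this
  rw [sub_eq_add_neg, A.D_add_right, hneg, sub_eq_add_neg]

/-- Trace of a rank-one endomorphism. -/
lemma SM.trace_rankOne [Module.Free C V] [Module.Finite C V]
    (φ : V →ₗ[C] C) (Y : V) :
    LinearMap.trace C V (φ.smulRight Y) = φ Y := by
  have h : φ.smulRight Y = dualTensorHom C V V (φ ⊗ₜ[C] Y) := by
    ext x; simp [dualTensorHom_apply]
  rw [h, LinearMap.trace_eq_contract_apply, contractLeft_apply]

/-- Trace of the map `X ↦ (α g(Y,Z)) X − (α g(X,Z)) Y`. -/
lemma SM.aux_trace [Module.Free C V] [Module.Finite C V]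
    (g : V → V → C) (hg : SM.IsMetric g) (α : C) (Y Z : V) (F : V →ₗ[C] V)
    (hF : ∀ X, F X = (α * g Y Z) • X - (α * g X Z) • Y) :
    LinearMap.trace C V F = α * g Y Z * ((Module.finrank C V : C) - 1) := by
  classical
  set φ : V →ₗ[C] C :=
    { toFun := fun X => α * g X Z
      map_add' := fun a b => by
        show α * g (a + b) Z = α * g a Z + α * g b Z
        rw [hg.add_left]; ring
      map_smul' := fun c a => by
        simp only [smul_eq_mul, RingHom.id_apply]
        show α * g (c • a) Z = c * (α * g a Z)
        rw [hg.smul_left]; ring } with hφ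
  have hFeq : F = (α * g Y Z) • (LinearMap.id : V →ₗ[C] V) - φ.smulRight Y := by
    ext X
    simp only [LinearMap.sub_apply, LinearMap.smul_apply, LinearMap.id_apply,
      LinearMap.smulRight_apply, hF X, hφ, LinearMap.coe_mk, AddHom.coe_mk]
  rw [hFeq, map_sub, map_smul, LinearMap.trace_id, SM.trace_rankOne]
  simp only [hφ, LinearMap.coe_mk, AddHom.coe_mk, smul_eq_mul]
  ring

/-- Duality identity for curvature tensors of dual connections. -/
lemma SM.aux_dual (A : SM.Geo C V) (g : V → V → C) (hg : SM.IsMetric g)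
    (cd cds : V → V → V) (hdual : SM.IsDual A g cd cds) (X Y Z W : V) :
    g W (SM.curv A cds X Y Z) = - g (SM.curv A cd X Y W) Z := by
  have exp : ∀ X Y : V, g W (cds X (cds Y Z))
      = A.D X (A.D Y (g W Z)) - A.D X (g (cd Y W) Z)
        - A.D Y (g (cd X W) Z) + g (cd Y (cd X W)) Z := by
    intro X Y
    have d1 := hdual X W (cds Y Z)
    have d2 := hdual Y W Z
    have d3 := hdual Y (cd X W) Z
    have d2' : A.D X (g W (cds Y Z))
        = A.D X (A.D Y (g W Z)) - A.D X (g (cd Y W) Z) := by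
      rw [show g W (cds Y Z) = A.D Y (g W Z) - g (cd Y W) Z from by
        linear_combination -d2, SM.D_sub]
    linear_combination d2' - d1 + d3
  have hbr : g W (cds (A.bracket X Y) Z)
      = A.D X (A.D Y (g W Z)) - A.D Y (A.D X (g W Z))
        - g (cd (A.bracket X Y) W) Z := by
    have h := hdual (A.bracket X Y) W Z
    rw [A.bracket_D] at h
    linear_combination -h
  simp only [SM.curv]
  rw [SM.gsub_right g hg, SM.gsub_right g hg, SM.gsub_left g hg, SM.gsub_left g hg]
  linear_combination exp X Y - exp Y X - hbr

end Aux

/-- Theorem 3.1: an `n(≥4)`-dimensional statistical manifold of constant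
curvature `K` is conformally-projectively flat, i.e. its
conformal-projective curvature tensor `W` vanishes identically. -/
theorem stmt8 {C V : Type*} [CommRing C] [Algebra ℝ C] [AddCommGroup V]
    [Module C V] [Module.Free C V] [Module.Finite C V]
    (A : SM.Geo C V) (g : V → V → C) (cd cds : V → V → V)
    (hn : 4 ≤ Module.finrank C V)
    (hg : SM.IsMetric g) (hstat : SM.IsStatConn A g cd)
    (hconn : SM.IsConn A cds) (hdual : SM.IsDual A g cd cds)
    (T Ts : V → V → V →ₗ[C] V)
    (hT : ∀ Y Z X, T Y Z X = SM.curv A cd X Y Z)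
    (hTs : ∀ Y Z X, Ts Y Z X = SM.curv A cds X Y Z)
    (Ric Rics : V → V → C)
    (hRic : ∀ Y Z, Ric Y Z = LinearMap.trace C V (T Y Z))
    (hRics : ∀ Y Z, Rics Y Z = LinearMap.trace C V (Ts Y Z))
    (RicS RicSs : V →ₗ[C] V)
    (hRicS : ∀ X Y, g (RicS X) Y = Ric X Y)
    (hRicSs : ∀ X Y, g (RicSs X) Y = Rics X Y)
    (σ' σ's : C)
    (hσ : σ' = LinearMap.trace C V RicS)
    (hσs : σ's = LinearMap.trace C V RicSs)
    (K : ℝ)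
    (hK : ∀ X Y Z, SM.curv A cd X Y Z
      = (algebraMap ℝ C K * g Y Z) • X - (algebraMap ℝ C K * g X Z) • Y) :
    ∀ X Y Z : V,
      SM.cpW A g cd Ric Rics RicS RicSs σ' (Module.finrank C V) X Y Z = 0 := by
  intro X Y Z
  set n := Module.finrank C V with hn'
  set f := algebraMap ℝ C with hf
  -- basic helpers
  have gsub1 := SM.gsub_left g hg
  -- value of the dual curvature
  have hcds : ∀ X Y Z : V, SM.curv A cds X Y Z
      = (f K * g Y Z) • X - (f K * g X Z) • Y := by
    intro X Y Z
    have hz : ∀ W, g (SM.curv A cds X Y Z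
        - ((f K * g Y Z) • X - (f K * g X Z) • Y)) W = 0 := by
      intro W
      rw [gsub1]
      have h2 : g (SM.curv A cds X Y Z) W = -(g (SM.curv A cd X Y W) Z) := by
        rw [hg.symm]; exact SM.aux_dual A g hg cd cds hdual X Y Z W
      rw [h2, hK X Y W, gsub1, hg.smul_left, hg.smul_left,
        gsub1 ((f K * g Y Z) • X), hg.smul_left, hg.smul_left]
      ring
    exact sub_eq_zero.mp (hg.nondeg _ hz)
  -- Ricci tensors
  have hRicval : ∀ Y Z : V, Ric Y Z = f K * g Y Z * ((n : C) - 1) := by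
    intro Y Z
    rw [hRic]
    exact SM.aux_trace g hg (f K) Y Z (T Y Z) (fun X => by rw [hT, hK])
  have hRicsval : ∀ Y Z : V, Rics Y Z = f K * g Y Z * ((n : C) - 1) := by
    intro Y Z
    rw [hRics]
    exact SM.aux_trace g hg (f K) Y Z (Ts Y Z) (fun X => by rw [hTs, hcds])
  -- Ricci operators
  have hRicSval : ∀ X : V, RicS X = (f K * ((n : C) - 1)) • X := by
    intro X
    have hz : ∀ Y, g (RicS X - (f K * ((n : C) - 1)) • X) Y = 0 := by
      intro Y
      rw [gsub1, hg.smul_left, hRicS, hRicval]; ring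
    exact sub_eq_zero.mp (hg.nondeg _ hz)
  have hRicSsval : ∀ X : V, RicSs X = (f K * ((n : C) - 1)) • X := by
    intro X
    have hz : ∀ Y, g (RicSs X - (f K * ((n : C) - 1)) • X) Y = 0 := by
      intro Y
      rw [gsub1, hg.smul_left, hRicSs, hRicsval]; ring
    exact sub_eq_zero.mp (hg.nondeg _ hz)
  -- scalar curvature
  have hσval : σ' = f K * ((n : C) - 1) * (n : C) := by
    rw [hσ]
    have hid : RicS = (f K * ((n : C) - 1)) • (LinearMap.id : V →ₗ[C] V) := by
      ext X
      simp only [LinearMap.smul_apply, LinearMap.id_apply, hRicSval X]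
    rw [hid, map_smul, LinearMap.trace_id, smul_eq_mul]
  -- the key real-number identity
  have h0 : (n : ℝ) ≠ 0 := by
    have : (4 : ℝ) ≤ (n : ℝ) := by exact_mod_cast hn
    linarith
  have h1 : (n : ℝ) - 1 ≠ 0 := by
    have : (4 : ℝ) ≤ (n : ℝ) := by exact_mod_cast hn
    intro h; linarith
  have h2 : (n : ℝ) - 2 ≠ 0 := by
    have : (4 : ℝ) ≤ (n : ℝ) := by exact_mod_cast hn
    intro h; linarith
  have hreal : K - 2 * ((1 / ((n : ℝ) * ((n : ℝ) - 2))) * (K * ((n : ℝ) - 1)) * (n : ℝ))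
      + (1 / (((n : ℝ) - 1) * ((n : ℝ) - 2))) * (K * ((n : ℝ) - 1)) * (n : ℝ) = 0 := by
    field_simp
    ring
  have hx : f K - 2 * (f (1 / ((n : ℝ) * ((n : ℝ) - 2))) * (f K * ((n : C) - 1)) * (n : C))
      + f (1 / (((n : ℝ) - 1) * ((n : ℝ) - 2))) * (f K * ((n : C) - 1)) * (n : C) = 0 := by
    have : f (K - 2 * ((1 / ((n : ℝ) * ((n : ℝ) - 2))) * (K * ((n : ℝ) - 1)) * (n : ℝ))
        + (1 / (((n : ℝ) - 1) * ((n : ℝ) - 2))) * (K * ((n : ℝ) - 1)) * (n : ℝ))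
        = f K - 2 * (f (1 / ((n : ℝ) * ((n : ℝ) - 2))) * (f K * ((n : C) - 1)) * (n : C))
          + f (1 / (((n : ℝ) - 1) * ((n : ℝ) - 2))) * (f K * ((n : C) - 1)) * (n : C) := by
      simp only [map_add, map_sub, map_mul, map_one, map_ofNat, map_natCast]
      try ring
    rw [← this, hreal, map_zero]
  -- final computation
  rw [SM.cpW, hK, hRicval, hRicval, hRicsval, hRicsval, hRicSval, hRicSval,
    hRicSsval, hRicSsval, hσval]
  match_scalars <;>
    first
      | linear_combination g Y Z * hx
      | linear_combination (- g X Z) * hx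
end

section
/- Let (M,g,∇) be a statistical manifold with dual connection ∇*. If (M,g,∇) has constant curvature K (R(X,Y)Z = K(g(Y,Z)X − g(X,Z)Y)), then the dual statistical manifold (M,g,∇*) also has constant curvature K. -/
/-- If a statistical manifold `(M,g,∇)` has constant curvature `K`, then the
dual statistical manifold `(M,g,∇*)` also has constant curvature `K`. -/
theorem stmt11 {C V : Type*} [CommRing C] [Algebra ℝ C] [AddCommGroup V]
    [Module C V]
    (A : SM.Geo C V) (g : V → V → C) (cd cds : V → V → V)
    (hg : SM.IsMetric g) (hstat : SM.IsStatConn A g cd)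
    (hconn : SM.IsConn A cds) (hdual : SM.IsDual A g cd cds)
    (K : ℝ)
    (hK : ∀ X Y Z, SM.curv A cd X Y Z
      = (algebraMap ℝ C K * g Y Z) • X - (algebraMap ℝ C K * g X Z) • Y) :
    ∀ X Y Z, SM.curv A cds X Y Z
      = (algebraMap ℝ C K * g Y Z) • X - (algebraMap ℝ C K * g X Z) • Y := by
  intro X Y Z
  -- D is additive/linear enough
  have Dzero : ∀ X : V, A.D X 0 = 0 := by
    intro X
    have h := A.D_add_right X 0 0
    rw [add_zero] at h
    linear_combination -h
  have Dneg : ∀ (X : V) (f : C), A.D X (-f) = -A.D X f := by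
    intro X f
    have h := A.D_add_right X f (-f)
    rw [show f + -f = (0:C) by ring, Dzero] at h
    linear_combination -h
  have Dsub : ∀ (X : V) (f h : C), A.D X (f - h) = A.D X f - A.D X h := by
    intro X f h
    rw [sub_eq_add_neg, A.D_add_right, Dneg]
    ring
  -- g linearity facts
  have gneg : ∀ X Y : V, g (-X) Y = -g X Y := by
    intro X Y
    rw [show -X = (-1 : C) • X by rw [neg_one_smul], hg.smul_left]
    ring
  have gsub : ∀ X Y Z : V, g (X - Y) Z = g X Z - g Y Z := by
    intro X Y Z
    rw [sub_eq_add_neg, hg.add_left, gneg]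
    ring
  -- the reversed dual identity
  have hd : ∀ X U W : V, g W (cds X U) = A.D X (g W U) - g (cd X W) U := by
    intro X U W
    linear_combination -hdual X W U
  -- key identity: g(R*(X,Y)Z, W) = - g(R(X,Y)W, Z)
  have key : ∀ X Y Z W : V,
      g (SM.curv A cds X Y Z) W = - g (SM.curv A cd X Y W) Z := by
    intro X Y Z W
    have h5 := hd X (cds Y Z) W
    have h6 := hd Y (cds X Z) W
    have h7 := hd (A.bracket X Y) Z W
    rw [hd Y Z W, hd Y Z (cd X W), Dsub] at h5
    rw [hd X Z W, hd X Z (cd Y W), Dsub] at h6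
    rw [A.bracket_D X Y (g W Z)] at h7
    simp only [SM.curv, gsub]
    rw [hg.symm (cds X (cds Y Z)) W, hg.symm (cds Y (cds X Z)) W,
      hg.symm (cds (A.bracket X Y) Z) W]
    linear_combination h5 - h6 - h7
  -- conclude by nondegeneracy
  have hz : ∀ W : V,
      g (SM.curv A cds X Y Z
        - ((algebraMap ℝ C K * g Y Z) • X - (algebraMap ℝ C K * g X Z) • Y)) W
        = 0 := by
    intro W
    rw [gsub, gsub, hg.smul_left, hg.smul_left, key, hK, gsub,
      hg.smul_left, hg.smul_left]
    ring
  have h0 := hg.nondeg _ hz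
  exact sub_eq_zero.mp h0
end
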